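/- arXiv:2603.17578 — 5 statements merged into one kernel-verified Lean document; each statement's English description precedes it below -/
import Mathlib

section
/- The S lex-cel solution R^SL satisfies concatenation consistency (CCON) but satisfies neither top-aligned consistency (TCON) nor bottom-aligned consistency (BCON). -/
namespace SocRank

/-- A coalitional ranking (a weak order on a set of feasible nonempty coalitions),
represented by its list of equivalence classes, listed from best to worst. -/
structure CoalRanking (X : Type*) where
  classes : List (Finset (Finset X))
  class_nonempty : ∀ C ∈ classes, C.Nonempty
  coal_nonempty : ∀ C ∈ classes, ∀ S ∈ C, S.Nonempty
  classes_disjoint : classes.Pairwise Disjoint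

namespace CoalRanking

variable {X : Type*}

/-- The coalition domain `𝒟(≿)` of a coalitional ranking. -/
def domain [DecidableEq X] (r : CoalRanking X) : Finset (Finset X) :=
  r.classes.foldr (· ∪ ·) ∅

/-- The list of equivalence classes of the restriction of a ranking to a set `D`
of coalitions. -/
def restrictClasses [DecidableEq X] (r : CoalRanking X) (D : Finset (Finset X)) :
    List (Finset (Finset X)) :=
  (r.classes.map (· ∩ D)).filter (fun C => decide C.Nonempty)

/-- Merging two lists of equivalence classes by aligning them at the top. -/
def zipUnion [DecidableEq X] :
    List (Finset (Finset X)) → List (Finset (Finset X)) → List (Finset (Finset X))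
  | [], M => M
  | L, [] => L
  | A :: L, B :: M => (A ∪ B) :: zipUnion L M

/-- `r` is a sum of the disjoint rankings `r₁` and `r₂`: its domain is the union of
the two domains and its restriction to the domain of `rᵢ` is `rᵢ`. -/
def IsSum [DecidableEq X] (r r₁ r₂ : CoalRanking X) : Prop :=
  Disjoint r₁.domain r₂.domain ∧
  r.domain = r₁.domain ∪ r₂.domain ∧
  r.restrictClasses r₁.domain = r₁.classes ∧
  r.restrictClasses r₂.domain = r₂.classes

/-- `r` is the concatenation sum `r₁ · r₂` of the disjoint rankings `r₁` and `r₂`. -/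
def IsConcatSum [DecidableEq X] (r r₁ r₂ : CoalRanking X) : Prop :=
  Disjoint r₁.domain r₂.domain ∧ r.classes = r₁.classes ++ r₂.classes

/-- `r` is the top-aligned sum `r₁ ⊨ r₂` of the disjoint rankings `r₁` and `r₂`. -/
def IsTopAlignedSum [DecidableEq X] (r r₁ r₂ : CoalRanking X) : Prop :=
  Disjoint r₁.domain r₂.domain ∧ r.classes = zipUnion r₁.classes r₂.classes

/-- `r` is the bottom-aligned sum `r₁ ⫤ r₂` of the disjoint rankings `r₁` and `r₂`. -/
def IsBottomAlignedSum [DecidableEq X] (r r₁ r₂ : CoalRanking X) : Prop :=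
  Disjoint r₁.domain r₂.domain ∧
  r.classes = (zipUnion r₁.classes.reverse r₂.classes.reverse).reverse

/-- Renaming the individuals of a coalitional ranking by a permutation `σ` of `X`:
the ranking `≿^σ`. -/
def mapPerm [DecidableEq X] (σ : Equiv.Perm X) (r : CoalRanking X) : CoalRanking X where
  classes := r.classes.map (fun C => C.image (fun S => S.image σ))
  class_nonempty := by
    intro C hC
    simp only [List.mem_map] at hC
    obtain ⟨C₀, hC₀, rfl⟩ := hC
    exact (r.class_nonempty C₀ hC₀).image _
  coal_nonempty := by
    intro C hC S hS
    simp only [List.mem_map] at hC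
    obtain ⟨C₀, hC₀, rfl⟩ := hC
    simp only [Finset.mem_image] at hS
    obtain ⟨S₀, hS₀, rfl⟩ := hS
    exact (r.coal_nonempty C₀ hC₀ S₀ hS₀).image _
  classes_disjoint := by
    refine List.Pairwise.map _ (fun {A B} h => ?_) r.classes_disjoint
    exact (Finset.disjoint_image
      (Finset.image_injective σ.injective)).mpr h

/-- Renaming the coalitions of a coalitional ranking by a permutation `π` of the set of
coalitions (mapping nonempty sets to nonempty sets): the ranking `≿_π`. -/
def mapCoalPerm [DecidableEq X] (π : Equiv.Perm (Finset X))
    (hπ : ∀ S : Finset X, S.Nonempty → (π S).Nonempty) (r : CoalRanking X) :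
    CoalRanking X where
  classes := r.classes.map (fun C => C.image π)
  class_nonempty := by
    intro C hC
    simp only [List.mem_map] at hC
    obtain ⟨C₀, hC₀, rfl⟩ := hC
    exact (r.class_nonempty C₀ hC₀).image _
  coal_nonempty := by
    intro C hC S hS
    simp only [List.mem_map] at hC
    obtain ⟨C₀, hC₀, rfl⟩ := hC
    simp only [Finset.mem_image] at hS
    obtain ⟨S₀, hS₀, rfl⟩ := hS
    exact hπ S₀ (r.coal_nonempty C₀ hC₀ S₀ hS₀)
  classes_disjoint := by
    refine List.Pairwise.map _ (fun {A B} h => ?_) r.classes_disjoint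
    exact (Finset.disjoint_image π.injective).mpr h

end CoalRanking

open CoalRanking

variable {X : Type*}

/-- A social ranking solution: a map assigning to every coalitional ranking a binary
relation on the individuals. -/
abbrev SRSMap (X : Type*) := CoalRanking X → X → X → Prop

/-- The symmetric part `I` of the social ranking. -/
def Ind (R : SRSMap X) (r : CoalRanking X) (x y : X) : Prop := R r x y ∧ R r y x

/-- The asymmetric part `P` of the social ranking. -/
def Pref (R : SRSMap X) (r : CoalRanking X) (x y : X) : Prop := R r x y ∧ ¬ R r y x

/-- Conditions (1)-(4) of consistency for the triple `(r₁, r₂, r)`. -/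
def ConsistentAt (R : SRSMap X) (r₁ r₂ r : CoalRanking X) : Prop :=
  ∀ x y : X,
    (Ind R r₁ x y → Ind R r₂ x y → Ind R r x y) ∧
    (Ind R r₁ x y → Pref R r₂ x y → Pref R r x y) ∧
    (Pref R r₁ x y → Ind R r₂ x y → Pref R r x y) ∧
    (Pref R r₁ x y → Pref R r₂ x y → Pref R r x y)

/-- Consistency (CON). -/
def CON [DecidableEq X] (R : SRSMap X) : Prop :=
  ∀ r₁ r₂ r : CoalRanking X, IsSum r r₁ r₂ → ConsistentAt R r₁ r₂ r

/-- Concatenation consistency (CCON). -/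
def CCON [DecidableEq X] (R : SRSMap X) : Prop :=
  ∀ r₁ r₂ r : CoalRanking X, IsConcatSum r r₁ r₂ → ConsistentAt R r₁ r₂ r

/-- Top-aligned consistency (TCON). -/
def TCON [DecidableEq X] (R : SRSMap X) : Prop :=
  ∀ r₁ r₂ r : CoalRanking X, IsTopAlignedSum r r₁ r₂ → ConsistentAt R r₁ r₂ r

/-- Bottom-aligned consistency (BCON). -/
def BCON [DecidableEq X] (R : SRSMap X) : Prop :=
  ∀ r₁ r₂ r : CoalRanking X, IsBottomAlignedSum r r₁ r₂ → ConsistentAt R r₁ r₂ r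

/-- II-concatenation consistency. -/
def IICCON [DecidableEq X] (R : SRSMap X) : Prop :=
  ∀ r₁ r₂ r : CoalRanking X, IsConcatSum r r₁ r₂ →
    ∀ x y : X, Ind R r₁ x y → Ind R r₂ x y → Ind R r x y

/-- IP-concatenation consistency. -/
def IPCCON [DecidableEq X] (R : SRSMap X) : Prop :=
  ∀ r₁ r₂ r : CoalRanking X, IsConcatSum r r₁ r₂ →
    ∀ x y : X, Ind R r₁ x y → Pref R r₂ x y → Pref R r x y

/-- PI-concatenation consistency. -/
def PICCON [DecidableEq X] (R : SRSMap X) : Prop :=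
  ∀ r₁ r₂ r : CoalRanking X, IsConcatSum r r₁ r₂ →
    ∀ x y : X, Pref R r₁ x y → Ind R r₂ x y → Pref R r x y

/-- PP-concatenation consistency. -/
def PPCCON [DecidableEq X] (R : SRSMap X) : Prop :=
  ∀ r₁ r₂ r : CoalRanking X, IsConcatSum r r₁ r₂ →
    ∀ x y : X, Pref R r₁ x y → Pref R r₂ x y → Pref R r x y

/-- `x_k`: the number of coalitions of the class `C` containing `x`. -/
def cnt [DecidableEq X] (x : X) (C : Finset (Finset X)) : ℕ :=
  (C.filter (fun S => x ∈ S)).card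

/-- The vector `θ_≿(x) = (x₁, …, x_l)`. -/
def theta [DecidableEq X] (r : CoalRanking X) (x : X) : List ℕ :=
  r.classes.map (cnt x)

/-- `sign`: `1` on positive numbers, `0` otherwise. -/
def sgn (n : ℕ) : ℕ := if 0 < n then 1 else 0

/-- The vector `θ̇_≿(x) = (sign(x₁), …, sign(x_l))`. -/
def thetaDot [DecidableEq X] (r : CoalRanking X) (x : X) : List ℕ :=
  (theta r x).map sgn

/-- The lexicographic order `≥^L` on vectors (of equal length). -/
def lexGE : List ℕ → List ℕ → Prop
  | _, [] => True
  | [], _ :: _ => False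
  | a :: as, b :: bs => b < a ∨ (a = b ∧ lexGE as bs)

/-- The lexicographic excellence solution (lex-cel) `R^L`. -/
def lexcel [DecidableEq X] : SRSMap X := fun r x y => lexGE (theta r x) (theta r y)

/-- The sign lexicographic excellence solution (S lex-cel) `R^{SL}`. -/
def slexcel [DecidableEq X] : SRSMap X := fun r x y => lexGE (thetaDot r x) (thetaDot r y)

/-- The plurality solution `R^P`. -/
def plurality [DecidableEq X] : SRSMap X := fun r x y =>
  (theta r y).headD 0 ≤ (theta r x).headD 0

/-- The sign plurality solution `R^{SP}`. -/
def splurality [DecidableEq X] : SRSMap X := fun r x y =>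
  sgn ((theta r y).headD 0) ≤ sgn ((theta r x).headD 0)

/-- The anti-plurality solution `R^{AP}`. -/
def antiplurality [DecidableEq X] : SRSMap X := fun r x y =>
  (theta r x).getLastD 0 ≤ (theta r y).getLastD 0

/-- `e_≿(x)`: the largest `k` such that `x` belongs to every coalition of each of the
first `k` equivalence classes. -/
def eIIS [DecidableEq X] (r : CoalRanking X) (x : X) : ℕ :=
  (r.classes.takeWhile (fun C => decide (∀ S ∈ C, x ∈ S))).length

/-- The intersection initial segment solution (IIS) `R^{IIS}`. -/
def iis [DecidableEq X] : SRSMap X := fun r x y => eIIS r y ≤ eIIS r x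

/-- The index of the equivalence class a coalition belongs to. -/
def classIdx [DecidableEq X] (r : CoalRanking X) (S : Finset X) : ℕ :=
  r.classes.findIdx (fun C => decide (S ∈ C))

/-- `C_{xy}`: the number of CP comparisons in favour of `x` against `y`. -/
def cpCount [DecidableEq X] [Fintype X] (r : CoalRanking X) (x y : X) : ℕ :=
  ((Finset.univ : Finset (Finset X)).filter (fun S =>
    S.Nonempty ∧ x ∉ S ∧ y ∉ S ∧ insert x S ∈ r.domain ∧ insert y S ∈ r.domain ∧
    classIdx r (insert x S) < classIdx r (insert y S))).card

/-- The Ceteris Paribus majority solution `R^{CPM}`. -/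
def cpm [DecidableEq X] [Fintype X] : SRSMap X := fun r x y =>
  cpCount r y x ≤ cpCount r x y

/-- Neutrality (NT). -/
def NT [DecidableEq X] (R : SRSMap X) : Prop :=
  ∀ (σ : Equiv.Perm X) (r : CoalRanking X) (x y : X),
    R (r.mapPerm σ) (σ x) (σ y) ↔ R r x y

/-- Weak coalitional anonymity (WCA). -/
def WCA [DecidableEq X] (R : SRSMap X) : Prop :=
  ∀ (x y : X) (π : Equiv.Perm (Finset X))
    (hπ : ∀ S : Finset X, S.Nonempty → (π S).Nonempty),
    (∀ S : Finset X, x ∈ S → x ∈ π S) → (∀ S : Finset X, y ∈ S → y ∈ π S) →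
    ∀ r : CoalRanking X,
      (R (r.mapCoalPerm π hπ) x y ↔ R r x y) ∧ (R (r.mapCoalPerm π hπ) y x ↔ R r y x)

/-- The weak union very important person property (WUVIP). -/
def WUVIP (R : SRSMap X) : Prop :=
  ∀ (r : CoalRanking X) (A B : Finset (Finset X)), r.classes = [A, B] →
    ∀ x y : X, (∃ S ∈ A, x ∈ S) → (∀ S ∈ A, y ∉ S) → Pref R r x y

/-- All indifference all winners (AIAW). -/
def AIAW [DecidableEq X] (R : SRSMap X) : Prop :=
  ∀ r : CoalRanking X, r.classes.length ≤ 1 →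
    (∀ x y : X, (∃ S ∈ r.domain, x ∈ S) → (∃ S ∈ r.domain, y ∈ S) → Ind R r x y) ∧
    (∀ x z : X, (∃ S ∈ r.domain, x ∈ S) → (∀ S ∈ r.domain, z ∉ S) → Pref R r x z)

/-- Independence of the decomposition of the worst sets (IDWS). -/
def IDWS [DecidableEq X] (R : SRSMap X) : Prop :=
  ∀ (r r' : CoalRanking X) (L G : List (Finset (Finset X))) (W : Finset (Finset X)),
    L ≠ [] → r.classes = L ++ [W] → r'.classes = L ++ G →
    G.foldr (· ∪ ·) ∅ = W →
    ∀ x y : X, Pref R r x y → Pref R r' x y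

/-- Independence of the addition of the worst sets (IAWS). -/
def IAWS [DecidableEq X] (R : SRSMap X) : Prop :=
  ∀ (r r' : CoalRanking X) (G : Finset (Finset X)),
    r'.classes = r.classes ++ [G] → (∀ S ∈ G, S ∉ r.domain) →
    ∀ x y : X, Pref R r x y → Pref R r' x y

/-- Tops-only (TO). -/
def TO (R : SRSMap X) : Prop :=
  ∀ (r r' : CoalRanking X) (A : Finset (Finset X)),
    r.classes.head? = some A → r'.classes.head? = some A → R r = R r'

/-- The dual S lex-cel `R^{DSL}`. -/
def dslexcel [DecidableEq X] : SRSMap X := fun r x y =>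
  lexGE ((thetaDot r y).reverse) ((thetaDot r x).reverse)

/-- The inverse dual S lex-cel `R^{IDSL}`. -/
def idslexcel [DecidableEq X] : SRSMap X := fun r x y => dslexcel r y x

/-- The vector `θ̃_≿(x)` used by the S lex-cel with precedence on unanimity. -/
def tildeTheta [DecidableEq X] (r : CoalRanking X) (x : X) : List ℕ :=
  r.classes.map (fun C => if cnt x C = C.card then 2 else if 0 < cnt x C then 1 else 0)

/-- The S lex-cel with a particular precedence on unanimity `R^{SLUN}`. -/
def slun [DecidableEq X] : SRSMap X := fun r x y =>
  lexGE (tildeTheta r x) (tildeTheta r y)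

/-- The S sum score `Σ_k sign(x_k)`. -/
def ssum [DecidableEq X] (r : CoalRanking X) (x : X) : ℕ := (thetaDot r x).sum

/-- The S sum rule with tie-breaking by S lex-cel `R^{SSUM,SL}`. -/
def ssumSL [DecidableEq X] : SRSMap X := fun r x y =>
  ssum r y < ssum r x ∨ (ssum r x = ssum r y ∧ slexcel r x y)

end SocRank

open SocRank

/-!
Under a concatenation `≿₁ · ≿₂` the vector `θ̇(x)` is `θ̇₁(x)` followed by `θ̇₂(x)`, and a
lexicographic comparison of concatenations is settled by the first blocks unless these
coincide; this is exactly CCON. Aligned sums instead merge classes of `≿₁` and `≿₂`, so a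
coalition of `≿₂` can fill the class where `≿₁` separated `x` from `y`, erasing a strict
preference that `≿₂` does not reverse.
-/

namespace SocRank

open CoalRanking

lemma lexGE_refl : ∀ a : List ℕ, lexGE a a
  | [] => trivial
  | _ :: as => Or.inr ⟨rfl, lexGE_refl as⟩

lemma lexGE_antisymm : ∀ {a b : List ℕ}, a.length = b.length → lexGE a b → lexGE b a → a = b
  | [], [], _, _, _ => rfl
  | a :: as, b :: bs, hlen, hab, hba => by
    rcases hab with hlt | ⟨rfl, hab⟩
    · rcases hba with hlt' | ⟨rfl, _⟩ <;> omega
    · rcases hba with hlt' | ⟨-, hba⟩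
      · omega
      · rw [lexGE_antisymm (Nat.succ_injective hlen) hab hba]

lemma lexGE_append_left_iff : ∀ (p a b : List ℕ), lexGE (p ++ a) (p ++ b) ↔ lexGE a b
  | [], _, _ => Iff.rfl
  | c :: p, a, b => by
    simpa only [List.cons_append, lexGE, lt_irrefl, false_or, true_and]
      using lexGE_append_left_iff p a b

lemma lexGE_append_of_lexGT : ∀ {a b : List ℕ}, a.length = b.length →
    lexGE a b → ¬ lexGE b a →
    ∀ a' b' : List ℕ, lexGE (a ++ a') (b ++ b') ∧ ¬ lexGE (b ++ b') (a ++ a')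
  | [], [], _, _, hba, _, _ => absurd trivial hba
  | a :: as, b :: bs, hlen, hab, hba, a', b' => by
    simp only [lexGE, not_or, not_and] at hab hba
    simp only [List.cons_append, lexGE, not_or, not_and]
    rcases hab with hlt | ⟨rfl, hab⟩
    · exact ⟨Or.inl hlt, by omega, by omega⟩
    · obtain ⟨hge, hnge⟩ :=
        lexGE_append_of_lexGT (Nat.succ_injective hlen) hab (hba.2 rfl) a' b'
      exact ⟨Or.inr ⟨rfl, hge⟩, lt_irrefl a, fun _ => hnge⟩

variable {X : Type*} [DecidableEq X]

lemma thetaDot_eq_map (r : CoalRanking X) (x : X) :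
    thetaDot r x = r.classes.map (fun C => if ∃ S ∈ C, x ∈ S then 1 else 0) := by
  simp only [thetaDot, theta, List.map_map]
  refine List.map_congr_left fun C _ => ?_
  simp only [Function.comp_apply, sgn, cnt, Finset.card_pos, Finset.filter_nonempty_iff]

lemma thetaDot_length (r : CoalRanking X) (x : X) :
    (thetaDot r x).length = r.classes.length := by
  simp [thetaDot, theta]

lemma ind_slexcel_iff {r : CoalRanking X} {x y : X} :
    Ind slexcel r x y ↔ thetaDot r x = thetaDot r y :=
  ⟨fun h => lexGE_antisymm (by rw [thetaDot_length, thetaDot_length]) h.1 h.2,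
    fun h => ⟨show lexGE _ _ by rw [h]; exact lexGE_refl _,
      show lexGE _ _ by rw [h]; exact lexGE_refl _⟩⟩

lemma ind_slexcel_of_forall_exists_mem {r : CoalRanking X} {x y : X}
    (h : ∀ C ∈ r.classes, ∃ S ∈ C, x ∈ S ∧ y ∈ S) : Ind slexcel r x y := by
  rw [ind_slexcel_iff, thetaDot_eq_map, thetaDot_eq_map]
  refine List.map_congr_left fun C hC => ?_
  obtain ⟨S, hS, hx, hy⟩ := h C hC
  rw [if_pos ⟨S, hS, hx⟩, if_pos ⟨S, hS, hy⟩]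

lemma pref_slexcel_of_classes_eq_cons {r : CoalRanking X} {C : Finset (Finset X)}
    {L : List (Finset (Finset X))} (hr : r.classes = C :: L) {x y : X}
    (hx : ∃ S ∈ C, x ∈ S) (hy : ∀ S ∈ C, y ∉ S) : Pref slexcel r x y := by
  have hy' : ¬ ∃ S ∈ C, y ∈ S := fun ⟨S, hS, hyS⟩ => hy S hS hyS
  simp only [Pref, slexcel, thetaDot_eq_map, hr, List.map_cons, if_pos hx, if_neg hy', lexGE]
  omega

section Concat

variable {r₁ r₂ r : CoalRanking X}

lemma thetaDot_of_classes_eq_append (hr : r.classes = r₁.classes ++ r₂.classes) (x : X) :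
    thetaDot r x = thetaDot r₁ x ++ thetaDot r₂ x := by
  simp [thetaDot, theta, hr]

lemma slexcel_iff_of_classes_eq_append (hr : r.classes = r₁.classes ++ r₂.classes)
    {x y : X} (h₁ : Ind slexcel r₁ x y) : slexcel r x y ↔ slexcel r₂ x y := by
  rw [ind_slexcel_iff] at h₁
  simp only [slexcel, thetaDot_of_classes_eq_append hr, h₁, lexGE_append_left_iff]

lemma pref_slexcel_of_classes_eq_append (hr : r.classes = r₁.classes ++ r₂.classes)
    {x y : X} (h₁ : Pref slexcel r₁ x y) : Pref slexcel r x y := by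
  simp only [Pref, slexcel, thetaDot_of_classes_eq_append hr]
  exact lexGE_append_of_lexGT (by rw [thetaDot_length, thetaDot_length]) h₁.1 h₁.2 _ _

end Concat

theorem slexcel_CCON : CCON (slexcel : SRSMap X) := by
  rintro r₁ r₂ r ⟨-, hr⟩ x y
  have hiff := fun h₁ => slexcel_iff_of_classes_eq_append (x := x) (y := y) hr h₁
  have hiff' := fun h₁ => slexcel_iff_of_classes_eq_append (x := y) (y := x) hr h₁
  refine ⟨fun h₁ h₂ => ?_, fun h₁ h₂ => ?_, fun h₁ _ => ?_, fun h₁ _ => ?_⟩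
  · exact ⟨(hiff h₁).2 h₂.1, (hiff' ⟨h₁.2, h₁.1⟩).2 h₂.2⟩
  · exact ⟨(hiff h₁).2 h₂.1, fun h => h₂.2 ((hiff' ⟨h₁.2, h₁.1⟩).1 h)⟩
  all_goals exact pref_slexcel_of_classes_eq_append hr h₁

def twoClassRanking (A B : Finset (Finset X)) (hA : A.Nonempty) (hB : B.Nonempty)
    (hA' : ∀ S ∈ A, S.Nonempty) (hB' : ∀ S ∈ B, S.Nonempty) (hAB : Disjoint A B) :
    CoalRanking X where
  classes := [A, B]
  class_nonempty := by simp [hA, hB]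
  coal_nonempty := by simpa using ⟨hA', hB'⟩
  classes_disjoint := by simpa using hAB

lemma domain_twoClassRanking {A B : Finset (Finset X)} (hA hB hA' hB' hAB) :
    (twoClassRanking A B hA hB hA' hB' hAB).domain = A ∪ B := by
  simp [domain, twoClassRanking]

/-- With `x, y, z` distinct, `r₁ : {x} ≻ {y}` strictly favours `x`, while in
`r₂ : {x, y} ≻ {x, y, z}` and in `r : {x}, {x, y} ≻ {y}, {x, y, z}` the two are indifferent.
Both rankings have two classes, so `r` is both their top- and their bottom-aligned sum. -/
lemma exists_aligned_sum_not_consistentAt_slexcel {x y z : X} (hxy : x ≠ y) (hxz : x ≠ z)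
    (hyz : y ≠ z) : ∃ r₁ r₂ r : CoalRanking X, IsTopAlignedSum r r₁ r₂ ∧
      IsBottomAlignedSum r r₁ r₂ ∧ ¬ ConsistentAt slexcel r₁ r₂ r := by
  have hxy_x : ({x, y} : Finset X) ≠ {x} :=
    ne_of_mem_of_not_mem' (a := y) (by simp) (by simp [hxy.symm])
  have hxy_y : ({x, y} : Finset X) ≠ {y} :=
    ne_of_mem_of_not_mem' (a := x) (by simp) (by simp [hxy])
  have hxyz_x : ({x, y, z} : Finset X) ≠ {x} :=
    ne_of_mem_of_not_mem' (a := y) (by simp) (by simp [hxy.symm])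
  have hxyz_y : ({x, y, z} : Finset X) ≠ {y} :=
    ne_of_mem_of_not_mem' (a := x) (by simp) (by simp [hxy])
  have hxyz_xy : ({x, y, z} : Finset X) ≠ {x, y} :=
    ne_of_mem_of_not_mem' (a := z) (by simp) (by simp [hxz.symm, hyz.symm])
  let r₁ := twoClassRanking {{x}} {{y}} (by simp) (by simp) (by simp) (by simp) (by simp [hxy])
  let r₂ := twoClassRanking {{x, y}} {{x, y, z}} (by simp) (by simp) (by simp) (by simp)
    (by simp [hxyz_xy.symm])
  let r := twoClassRanking ({{x}} ∪ {{x, y}}) ({{y}} ∪ {{x, y, z}}) (by simp) (by simp)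
    (by simp) (by simp) (by simp [hxy.symm, hxy_y.symm, hxyz_x, hxyz_xy])
  have hdisj : Disjoint r₁.domain r₂.domain := by
    simp only [r₁, r₂, domain_twoClassRanking]
    simp [hxy, hxy_x, hxyz_x, hxyz_y]
  refine ⟨r₁, r₂, r, ⟨hdisj, rfl⟩, ⟨hdisj, rfl⟩, fun h => ?_⟩
  have hP₁ : Pref slexcel r₁ x y :=
    pref_slexcel_of_classes_eq_cons rfl ⟨{x}, by simp⟩ (by simp [hxy.symm])
  have hI₂ : Ind slexcel r₂ x y := ind_slexcel_of_forall_exists_mem (by simp [r₂, twoClassRanking])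
  have hI : Ind slexcel r x y := ind_slexcel_of_forall_exists_mem (by simp [r, twoClassRanking])
  exact ((h x y).2.2.1 hP₁ hI₂).2 hI.2

end SocRank

/-- S lex-cel satisfies CCON but satisfies neither TCON nor BCON. -/
theorem slexcel_ccon_not_tcon_not_bcon {X : Type*} [DecidableEq X] [Fintype X]
    (hX : 3 ≤ Fintype.card X) :
    CCON (slexcel : SRSMap X) ∧ ¬ TCON (slexcel : SRSMap X) ∧
      ¬ BCON (slexcel : SRSMap X) := by
  obtain ⟨x, y, z, hxy, hxz, hyz⟩ := Fintype.two_lt_card_iff.1 hX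
  obtain ⟨r₁, r₂, r, htop, hbot, hr⟩ := exists_aligned_sum_not_consistentAt_slexcel hxy hxz hyz
  exact ⟨slexcel_CCON, fun h => hr (h r₁ r₂ r htop), fun h => hr (h r₁ r₂ r hbot)⟩
end

section
/- The plurality solution R^P satisfies top-aligned consistency (TCON) but satisfies neither concatenation consistency (CCON) nor bottom-aligned consistency (BCON). -/
open SocRank

/-!
Plurality only looks at the top class, and the top class of a top-aligned sum is the
disjoint union of the top classes of the summands, so the plurality score is additive
over top-aligned sums and consistency follows. A concatenation sum, and a bottom-aligned
sum whose first summand is longer, keep the top class of the first summand: a tie there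
survives even when the second summand strictly separates the two individuals.
-/

namespace SocRank

variable {X : Type*}

theorem consistentAt_of_score_add {M : Type*} [AddCommMonoid M] [LinearOrder M]
    [IsOrderedCancelAddMonoid M] {R : SRSMap X} (f : CoalRanking X → X → M)
    (hR : ∀ r x y, R r x y ↔ f r y ≤ f r x) {r₁ r₂ r : CoalRanking X}
    (hf : ∀ z, f r z = f r₁ z + f r₂ z) : ConsistentAt R r₁ r₂ r := by
  intro x y
  simp only [Ind, Pref, hR, hf, not_le]
  refine ⟨?_, ?_, ?_, ?_⟩
  · rintro ⟨h₁, h₁'⟩ ⟨h₂, h₂'⟩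
    exact ⟨add_le_add h₁ h₂, add_le_add h₁' h₂'⟩
  · rintro ⟨h₁, -⟩ ⟨-, h₂⟩
    exact ⟨(add_lt_add_of_le_of_lt h₁ h₂).le, add_lt_add_of_le_of_lt h₁ h₂⟩
  · rintro ⟨-, h₁⟩ ⟨h₂, -⟩
    exact ⟨(add_lt_add_of_lt_of_le h₁ h₂).le, add_lt_add_of_lt_of_le h₁ h₂⟩
  · rintro ⟨-, h₁⟩ ⟨-, h₂⟩
    exact ⟨(add_lt_add h₁ h₂).le, add_lt_add h₁ h₂⟩

theorem TO.not_consistentAt {R : SRSMap X} (hR : TO R) {r₁ r₂ r : CoalRanking X}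
    {A : Finset (Finset X)} (hr : r.classes.head? = some A) (hr₁ : r₁.classes.head? = some A)
    {x y : X} (h₁ : Ind R r₁ x y) (h₂ : Pref R r₂ x y) : ¬ ConsistentAt R r₁ r₂ r := by
  intro h
  have hP : Pref R r x y := (h x y).2.1 h₁ h₂
  rw [Pref, hR r r₁ A hr hr₁] at hP
  exact hP.2 h₁.2

namespace CoalRanking

variable [DecidableEq X]

theorem mem_domain {r : CoalRanking X} {S : Finset X} :
    S ∈ r.domain ↔ ∃ C ∈ r.classes, S ∈ C := by
  rw [domain]
  induction r.classes with
  | nil => simp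
  | cons C L ih => simp [ih]

theorem subset_domain {r : CoalRanking X} {C : Finset (Finset X)} (hC : C ∈ r.classes) :
    C ⊆ r.domain :=
  fun _ hS => mem_domain.2 ⟨C, hC, hS⟩

theorem headD_subset_domain (r : CoalRanking X) : r.classes.headD ∅ ⊆ r.domain := by
  cases hr : r.classes with
  | nil => simp
  | cons C L => exact subset_domain (by simp [hr])

def ofClass (C : Finset (Finset X)) (hC : C.Nonempty) (hS : ∀ S ∈ C, S.Nonempty) :
    CoalRanking X where
  classes := [C]
  class_nonempty := by simpa using hC
  coal_nonempty := by simpa using hS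
  classes_disjoint := List.pairwise_singleton _ _

theorem domain_ofClass (C : Finset (Finset X)) (hC : C.Nonempty) (hS : ∀ S ∈ C, S.Nonempty) :
    (ofClass C hC hS).domain = C := by
  simp [domain, ofClass]

def concat (r₁ r₂ : CoalRanking X) (h : Disjoint r₁.domain r₂.domain) : CoalRanking X where
  classes := r₁.classes ++ r₂.classes
  class_nonempty := by
    simpa [or_imp, forall_and] using ⟨r₁.class_nonempty, r₂.class_nonempty⟩
  coal_nonempty := by
    simpa [or_imp, forall_and] using ⟨r₁.coal_nonempty, r₂.coal_nonempty⟩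
  classes_disjoint := List.pairwise_append.2 ⟨r₁.classes_disjoint, r₂.classes_disjoint,
    fun _ hA _ hB => h.mono (subset_domain hA) (subset_domain hB)⟩

theorem domain_concat (r₁ r₂ : CoalRanking X) (h : Disjoint r₁.domain r₂.domain) :
    (concat r₁ r₂ h).domain = r₁.domain ∪ r₂.domain := by
  ext S
  simp [mem_domain, concat, or_and_right, exists_or]

theorem isConcatSum_concat (r₁ r₂ : CoalRanking X) (h : Disjoint r₁.domain r₂.domain) :
    IsConcatSum (concat r₁ r₂ h) r₁ r₂ :=
  ⟨h, rfl⟩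

theorem headD_zipUnion (L M : List (Finset (Finset X))) :
    (zipUnion L M).headD ∅ = L.headD ∅ ∪ M.headD ∅ := by
  cases L <;> cases M <;> simp [zipUnion]

end CoalRanking

open CoalRanking

variable [DecidableEq X]

theorem cnt_union (x : X) {A B : Finset (Finset X)} (h : Disjoint A B) :
    cnt x (A ∪ B) = cnt x A + cnt x B := by
  rw [cnt, Finset.filter_union, Finset.card_union_of_disjoint
    (h.mono (Finset.filter_subset _ _) (Finset.filter_subset _ _)), cnt, cnt]

theorem cnt_singleton (x : X) (S : Finset X) : cnt x {S} = if x ∈ S then 1 else 0 := by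
  rw [cnt, Finset.filter_singleton]
  split_ifs <;> rfl

theorem headD_theta (r : CoalRanking X) (x : X) :
    (theta r x).headD 0 = cnt x (r.classes.headD ∅) := by
  rw [theta]
  cases r.classes <;> simp [cnt]

theorem headD_theta_of_head?_eq {r : CoalRanking X} {A : Finset (Finset X)}
    (h : r.classes.head? = some A) (x : X) : (theta r x).headD 0 = cnt x A := by
  rw [headD_theta, List.headD_eq_head?_getD, h, Option.getD_some]

theorem headD_theta_of_isTopAlignedSum {r r₁ r₂ : CoalRanking X}
    (h : IsTopAlignedSum r r₁ r₂) (x : X) :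
    (theta r x).headD 0 = (theta r₁ x).headD 0 + (theta r₂ x).headD 0 := by
  rw [headD_theta, headD_theta, headD_theta, h.2, headD_zipUnion,
    cnt_union x (h.1.mono (headD_subset_domain r₁) (headD_subset_domain r₂))]

theorem plurality_TO : TO (plurality : SRSMap X) := by
  intro r r' A hr hr'
  funext x y
  simp only [plurality, headD_theta_of_head?_eq hr, headD_theta_of_head?_eq hr']

theorem plurality_TCON : TCON (plurality : SRSMap X) :=
  fun _ _ _ h => consistentAt_of_score_add _ (fun _ _ _ => Iff.rfl)
    (headD_theta_of_isTopAlignedSum h)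

theorem pair_ne_singleton {a b : X} (hab : a ≠ b) : ({a, b} : Finset X) ≠ {a} := fun h => by
  simpa [Finset.card_pair hab] using congrArg Finset.card h

theorem ind_plurality_of_head?_eq_pair {r : CoalRanking X} {a b : X}
    (h : r.classes.head? = some {{a, b}}) : Ind plurality r a b := by
  simp only [Ind, plurality, headD_theta_of_head?_eq h, cnt_singleton]
  simp

theorem pref_plurality_of_head?_eq_singleton {r : CoalRanking X} {a b : X} (hab : a ≠ b)
    (h : r.classes.head? = some {{a}}) : Pref plurality r a b := by
  simp only [Pref, plurality, headD_theta_of_head?_eq h, cnt_singleton]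
  simp [hab.symm]

theorem plurality_not_CCON {a b : X} (hab : a ≠ b) : ¬ CCON (plurality : SRSMap X) := by
  have hne := pair_ne_singleton hab
  let tie : CoalRanking X := ofClass {{a, b}} (by simp) (by simp)
  let winA : CoalRanking X := ofClass {{a}} (by simp) (by simp)
  have hd : Disjoint tie.domain winA.domain := by simp [tie, winA, domain_ofClass, hne]
  exact fun hC => plurality_TO.not_consistentAt (r := concat tie winA hd) rfl rfl
    (ind_plurality_of_head?_eq_pair rfl) (pref_plurality_of_head?_eq_singleton hab rfl)
    (hC _ _ _ (isConcatSum_concat tie winA hd))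

theorem plurality_not_BCON {a b : X} (hab : a ≠ b) : ¬ BCON (plurality : SRSMap X) := by
  have hne := pair_ne_singleton hab
  let tie : CoalRanking X := ofClass {{a, b}} (by simp) (by simp)
  let winA : CoalRanking X := ofClass {{a}} (by simp) (by simp)
  let winB : CoalRanking X := ofClass {{b}} (by simp) (by simp)
  let winBA : CoalRanking X := ofClass ({{b}} ∪ {{a}}) (by simp) (by simp)
  have hd₁ : Disjoint tie.domain winB.domain := by simp [tie, winB, domain_ofClass, hab]
  have hd₂ : Disjoint (concat tie winB hd₁).domain winA.domain := by
    simp [tie, winA, winB, domain_concat, domain_ofClass, hne.symm, hab]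
  have hd₃ : Disjoint tie.domain winBA.domain := by
    simp [tie, winBA, domain_ofClass, hne, hab]
  -- the bottom classes `{{b}}` and `{{a}}` merge, the top class `{{a, b}}` is untouched
  have hsum : IsBottomAlignedSum (concat tie winBA hd₃) (concat tie winB hd₁) winA :=
    ⟨hd₂, rfl⟩
  exact fun hB => plurality_TO.not_consistentAt rfl rfl
    (ind_plurality_of_head?_eq_pair rfl) (pref_plurality_of_head?_eq_singleton hab rfl)
    (hB _ _ _ hsum)

end SocRank

/-- plurality satisfies TCON but satisfies neither CCON nor BCON. -/
theorem plurality_tcon_not_ccon_not_bcon {X : Type*} [DecidableEq X] [Fintype X]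
    (hX : 3 ≤ Fintype.card X) :
    TCON (plurality : SRSMap X) ∧ ¬ CCON (plurality : SRSMap X) ∧
      ¬ BCON (plurality : SRSMap X) := by
  obtain ⟨a, b, hab⟩ := Fintype.exists_pair_of_one_lt_card (by omega : 1 < Fintype.card X)
  exact ⟨plurality_TCON, plurality_not_CCON hab, plurality_not_BCON hab⟩
end

section
/- The CP majority solution R^CPM satisfies none of concatenation consistency (CCON), top-aligned consistency (TCON), and bottom-aligned consistency (BCON). -/
open SocRank

/-! Take three distinct individuals `a`, `b`, `c`. Let `≿₂` rank only `{b, c}` and let `≿₁`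
rank `{a, c}`, possibly together with `{a}` above or below it. Neither ranking compares `a` with
`b` ceteris paribus, so `a I b` in both; in the sum the only such comparison is at `S = {c}`.
In the concatenation and bottom-aligned sums `{a, c} ≻ {b, c}`, so `a P b`; in the top-aligned
sum of `{a} ≻ {a, c}` with `{b, c}`, the class of `{b, c}` is the top one, so `b P a`. -/

namespace SocRank

open Finset

section Consistency

variable {X : Type*} {R : SRSMap X} {r₁ r₂ r : CoalRanking X} {x y : X}

lemma not_ind_of_pref (h : Pref R r x y) : ¬ Ind R r x y ∧ ¬ Ind R r y x :=
  ⟨fun hI => h.2 hI.2, fun hI => h.2 hI.1⟩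

lemma not_consistentAt_of_ind_of_ind (h₁ : Ind R r₁ x y) (h₂ : Ind R r₂ x y)
    (h : ¬ Ind R r x y) : ¬ ConsistentAt R r₁ r₂ r :=
  fun hcon => h ((hcon x y).1 h₁ h₂)

end Consistency

section Coalitions

variable {X : Type*} [DecidableEq X] {a b c : X}

lemma pair_ne_pair (hab : a ≠ b) (hac : a ≠ c) : ({a, c} : Finset X) ≠ {b, c} :=
  ne_of_mem_of_not_mem' (mem_insert_self a {c}) (by simp [hab, hac])

lemma singleton_ne_pair (hab : a ≠ b) : ({a} : Finset X) ≠ {b, c} :=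
  (ne_of_mem_of_not_mem' (mem_insert_self b {c}) (by simpa using hab.symm)).symm

lemma singleton_ne_pair_self (hac : a ≠ c) : ({a} : Finset X) ≠ {a, c} :=
  (ne_of_mem_of_not_mem' (mem_insert_of_mem (mem_singleton_self c))
    (by simpa using hac.symm)).symm

end Coalitions

section CeterisParibus

variable {X : Type*} [DecidableEq X] [Fintype X] {r : CoalRanking X} {x y : X}

def cpComparisons (r : CoalRanking X) (x y : X) : Finset (Finset X) :=
  univ.filter fun S =>
    S.Nonempty ∧ x ∉ S ∧ y ∉ S ∧ insert x S ∈ r.domain ∧ insert y S ∈ r.domain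

lemma cpComparisons_comm (r : CoalRanking X) (x y : X) :
    cpComparisons r x y = cpComparisons r y x := by
  ext S
  simp only [cpComparisons, mem_filter]
  tauto

lemma cpCount_eq_card_filter_cpComparisons (r : CoalRanking X) (x y : X) :
    cpCount r x y = ((cpComparisons r x y).filter fun S =>
      classIdx r (insert x S) < classIdx r (insert y S)).card := by
  simp only [cpCount, cpComparisons, filter_filter, and_assoc]

lemma cpm_ind_of_cpComparisons_eq_empty (h : cpComparisons r x y = ∅) : Ind cpm r x y := by
  have hxy : cpCount r x y = 0 := by
    rw [cpCount_eq_card_filter_cpComparisons, h, filter_empty, card_empty]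
  have hyx : cpCount r y x = 0 := by
    rw [cpCount_eq_card_filter_cpComparisons, cpComparisons_comm, h, filter_empty, card_empty]
  exact ⟨hyx.trans_le hxy.ge, hxy.trans_le hyx.ge⟩

lemma cpm_pref_of_cpComparisons_eq_singleton {S : Finset X} (h : cpComparisons r x y = {S})
    (hlt : classIdx r (insert x S) < classIdx r (insert y S)) : Pref cpm r x y := by
  have hxy : cpCount r x y = 1 := by
    rw [cpCount_eq_card_filter_cpComparisons, h, filter_singleton, if_pos hlt, card_singleton]
  have hyx : cpCount r y x = 0 := by
    rw [cpCount_eq_card_filter_cpComparisons, cpComparisons_comm, h, filter_singleton,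
      if_neg hlt.asymm, card_empty]
  exact ⟨by simp only [cpm, hxy, hyx, zero_le], by simp only [cpm, hxy, hyx]; omega⟩

lemma cpComparisons_eq_empty (h : ∀ T ∈ r.domain, y ∉ T) : cpComparisons r x y = ∅ :=
  filter_eq_empty_iff.2 fun S _ hS => h _ hS.2.2.2.2 (mem_insert_self y S)

lemma cpm_ind_of_forall_not_mem_right (h : ∀ T ∈ r.domain, y ∉ T) : Ind cpm r x y :=
  cpm_ind_of_cpComparisons_eq_empty (cpComparisons_eq_empty h)

lemma cpm_ind_of_forall_not_mem_left (h : ∀ T ∈ r.domain, x ∉ T) : Ind cpm r x y :=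
  cpm_ind_of_cpComparisons_eq_empty ((cpComparisons_comm r x y).trans (cpComparisons_eq_empty h))

lemma cpComparisons_eq_singleton {c : X} (hxc : x ≠ c) (hyc : y ≠ c)
    (hx : {x, c} ∈ r.domain) (hy : {y, c} ∈ r.domain)
    (hunique : ∀ T ∈ r.domain, y ∈ T → T = {y, c}) : cpComparisons r x y = {{c}} := by
  ext S
  simp only [cpComparisons, mem_filter, mem_univ, true_and, mem_singleton]
  constructor
  · rintro ⟨-, -, hyS, -, hS⟩
    rw [← erase_insert hyS, hunique _ hS (mem_insert_self y S),
      erase_insert (notMem_singleton.2 hyc)]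
  · rintro rfl
    exact ⟨singleton_nonempty c, notMem_singleton.2 hxc, notMem_singleton.2 hyc, hx, hy⟩

lemma cpm_pref_of_forall_mem_eq_pair_right {c : X} (hxc : x ≠ c) (hyc : y ≠ c)
    (hx : {x, c} ∈ r.domain) (hy : {y, c} ∈ r.domain)
    (hunique : ∀ T ∈ r.domain, y ∈ T → T = {y, c})
    (hlt : classIdx r {x, c} < classIdx r {y, c}) : Pref cpm r x y :=
  cpm_pref_of_cpComparisons_eq_singleton (cpComparisons_eq_singleton hxc hyc hx hy hunique) hlt

lemma cpm_pref_of_forall_mem_eq_pair_left {c : X} (hxc : x ≠ c) (hyc : y ≠ c)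
    (hx : {x, c} ∈ r.domain) (hy : {y, c} ∈ r.domain)
    (hunique : ∀ T ∈ r.domain, x ∈ T → T = {x, c})
    (hlt : classIdx r {x, c} < classIdx r {y, c}) : Pref cpm r x y :=
  cpm_pref_of_cpComparisons_eq_singleton
    ((cpComparisons_comm r x y).trans (cpComparisons_eq_singleton hyc hxc hy hx hunique)) hlt

end CeterisParibus

section Counterexamples

variable {X : Type*} [DecidableEq X] [Fintype X] {a b c : X}

theorem cpm_not_ccon (hab : a ≠ b) (hac : a ≠ c) (hbc : b ≠ c) : ¬ CCON (cpm : SRSMap X) := by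
  intro hccon
  have hne := pair_ne_pair hab hac
  refine not_consistentAt_of_ind_of_ind (x := a) (y := b) ?_ ?_ ?_ (hccon
    ⟨[{{a, c}}], by simp, by simp, by simp⟩
    ⟨[{{b, c}}], by simp, by simp, by simp⟩
    ⟨[{{a, c}}, {{b, c}}], by simp, by simp, by simp [hne]⟩
    ⟨by simp [CoalRanking.domain, hne], rfl⟩)
  · exact cpm_ind_of_forall_not_mem_right (by simp [CoalRanking.domain, hab.symm, hbc])
  · exact cpm_ind_of_forall_not_mem_left (by simp [CoalRanking.domain, hab, hac])
  · refine (not_ind_of_pref (cpm_pref_of_forall_mem_eq_pair_right hac hbc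
      (by simp [CoalRanking.domain]) (by simp [CoalRanking.domain])
      (by simp [CoalRanking.domain, hab.symm, hbc]) ?_)).1
    simp [classIdx, List.findIdx_cons, hne.symm]

theorem cpm_not_tcon (hab : a ≠ b) (hac : a ≠ c) (hbc : b ≠ c) : ¬ TCON (cpm : SRSMap X) := by
  intro htcon
  have hne := pair_ne_pair hab hac
  have hne₁ := singleton_ne_pair (c := c) hab
  have hne₂ := singleton_ne_pair_self hac
  refine not_consistentAt_of_ind_of_ind (x := a) (y := b) ?_ ?_ ?_ (htcon
    ⟨[{{a}}, {{a, c}}], by simp, by simp, by simp [hne₂]⟩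
    ⟨[{{b, c}}], by simp, by simp, by simp⟩
    ⟨[{{a}} ∪ {{b, c}}, {{a, c}}], by simp, by simp, by simp [hne₂, hne.symm]⟩
    ⟨by simp [CoalRanking.domain, hne.symm, hne₁.symm], rfl⟩)
  · exact cpm_ind_of_forall_not_mem_right (by simp [CoalRanking.domain, hab.symm, hbc])
  · exact cpm_ind_of_forall_not_mem_left (by simp [CoalRanking.domain, hab, hac])
  · refine (not_ind_of_pref (cpm_pref_of_forall_mem_eq_pair_left hbc hac
      (by simp [CoalRanking.domain]) (by simp [CoalRanking.domain])
      (by simp [CoalRanking.domain, hab.symm, hbc]) ?_)).2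
    simp [classIdx, List.findIdx_cons, hne, hne₂.symm]

theorem cpm_not_bcon (hab : a ≠ b) (hac : a ≠ c) (hbc : b ≠ c) : ¬ BCON (cpm : SRSMap X) := by
  intro hbcon
  have hne := pair_ne_pair hab hac
  have hne₁ := singleton_ne_pair (c := c) hab
  have hne₂ := singleton_ne_pair_self hac
  refine not_consistentAt_of_ind_of_ind (x := a) (y := b) ?_ ?_ ?_ (hbcon
    ⟨[{{a, c}}, {{a}}], by simp, by simp, by simp [hne₂.symm]⟩
    ⟨[{{b, c}}], by simp, by simp, by simp⟩
    ⟨[{{a, c}}, {{a}} ∪ {{b, c}}], by simp, by simp, by simp [hne₂.symm, hne]⟩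
    ⟨by simp [CoalRanking.domain, hne.symm, hne₁.symm], rfl⟩)
  · exact cpm_ind_of_forall_not_mem_right (by simp [CoalRanking.domain, hab.symm, hbc])
  · exact cpm_ind_of_forall_not_mem_left (by simp [CoalRanking.domain, hab, hac])
  · refine (not_ind_of_pref (cpm_pref_of_forall_mem_eq_pair_right hac hbc
      (by simp [CoalRanking.domain]) (by simp [CoalRanking.domain])
      (by simp [CoalRanking.domain, hab.symm, hbc]) ?_)).1
    simp [classIdx, List.findIdx_cons, hne.symm, hne₁.symm]

end Counterexamples

end SocRank

/-- CP majority satisfies none of CCON, TCON and BCON. -/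
theorem cpm_not_ccon_not_tcon_not_bcon {X : Type*} [DecidableEq X] [Fintype X]
    (hX : 3 ≤ Fintype.card X) :
    ¬ CCON (cpm : SRSMap X) ∧ ¬ TCON (cpm : SRSMap X) ∧ ¬ BCON (cpm : SRSMap X) := by
  obtain ⟨a, b, c, hab, hac, hbc⟩ := Fintype.two_lt_card_iff.1 hX
  exact ⟨cpm_not_ccon hab hac hbc, cpm_not_tcon hab hac hbc, cpm_not_bcon hab hac hbc⟩
end

section
/- The anti-plurality solution R^AP satisfies II-CCON, IP-CCON, and PP-CCON, but does not satisfy PI-CCON. -/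
open SocRank

section Aux

open SocRank CoalRanking

variable {X : Type*} [DecidableEq X]

lemma getLastD_append_right {α : Type*} {a b : List α} (hb : b ≠ []) (d : α) :
    (a ++ b).getLastD d = b.getLastD d := by
  rw [List.getLastD_eq_getLast?, List.getLastD_eq_getLast?, List.getLast?_append]
  cases hb' : b.getLast? with
  | none => exact absurd (List.getLast?_eq_none_iff.mp hb') hb
  | some v => rfl

lemma theta_concat {r r₁ r₂ : CoalRanking X}
    (h : r.classes = r₁.classes ++ r₂.classes) (x : X) :
    theta r x = theta r₁ x ++ theta r₂ x := by
  simp [theta, h]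

lemma ap_last_concat {r r₁ r₂ : CoalRanking X}
    (h : r.classes = r₁.classes ++ r₂.classes) (h₂ : r₂.classes ≠ []) (x : X) :
    (theta r x).getLastD 0 = (theta r₂ x).getLastD 0 := by
  rw [theta_concat h x]
  exact getLastD_append_right (by simpa [theta] using h₂) 0

lemma ap_last_concat_nil {r r₁ r₂ : CoalRanking X}
    (h : r.classes = r₁.classes ++ r₂.classes) (h₂ : r₂.classes = []) (x : X) :
    (theta r x).getLastD 0 = (theta r₁ x).getLastD 0 := by
  rw [theta_concat h x]
  simp [theta, h₂]

lemma ap_pref_iff {r : CoalRanking X} {x y : X} :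
    Pref antiplurality r x y ↔ (theta r x).getLastD 0 < (theta r y).getLastD 0 := by
  simp [Pref, antiplurality]
  omega

lemma ap_ind_iff {r : CoalRanking X} {x y : X} :
    Ind antiplurality r x y ↔ (theta r x).getLastD 0 = (theta r y).getLastD 0 := by
  simp [Ind, antiplurality]
  omega

end Aux


/-- anti-plurality satisfies II-CCON, IP-CCON and PP-CCON,
but does not satisfy PI-CCON. -/
theorem antiplurality_partial_ccon {X : Type*} [DecidableEq X] [Fintype X]
    (hX : 3 ≤ Fintype.card X) :
    IICCON (antiplurality : SRSMap X) ∧ IPCCON (antiplurality : SRSMap X) ∧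
      PPCCON (antiplurality : SRSMap X) ∧ ¬ PICCON (antiplurality : SRSMap X) := by
  have pos : IICCON (antiplurality : SRSMap X) ∧ IPCCON (antiplurality : SRSMap X) ∧
      PPCCON (antiplurality : SRSMap X) := by
    refine ⟨?_, ?_, ?_⟩ <;>
    · intro r₁ r₂ r hsum x y h1 h2
      obtain ⟨-, hc⟩ := hsum
      by_cases h₂ : r₂.classes = []
      · first
        | (rw [ap_ind_iff] at h1 ⊢
           rw [ap_last_concat_nil hc h₂ x, ap_last_concat_nil hc h₂ y]
           exact h1)
        | (exfalso
           rw [ap_pref_iff] at h2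
           simp [theta, h₂] at h2)
      · first
        | (rw [ap_ind_iff] at h2 ⊢
           rw [ap_last_concat hc h₂ x, ap_last_concat hc h₂ y]
           exact h2)
        | (rw [ap_pref_iff] at h2 ⊢
           rw [ap_last_concat hc h₂ x, ap_last_concat hc h₂ y]
           exact h2)
  refine ⟨pos.1, pos.2.1, pos.2.2, ?_⟩
  intro hpi
  obtain ⟨x, y, hxy⟩ := Fintype.exists_pair_of_one_lt_card (α := X) (by omega)
  have hyx : ({y} : Finset X) ≠ ({x, y} : Finset X) := by
    intro h
    apply hxy
    have : x ∈ ({y} : Finset X) := by rw [h]; simp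
    simpa using this
  set r₁ : CoalRanking X :=
    ⟨[{({y} : Finset X)}], by simp, by simp, by simp⟩ with hr₁
  set r₂ : CoalRanking X :=
    ⟨[{({x, y} : Finset X)}], by simp, by simp [Finset.insert_nonempty], by simp⟩ with hr₂
  set r : CoalRanking X :=
    ⟨[{({y} : Finset X)}, {({x, y} : Finset X)}], by simp,
      by simp [Finset.insert_nonempty],
      by simp [List.pairwise_cons, Finset.disjoint_singleton, hyx]⟩ with hr
  have hconcat : CoalRanking.IsConcatSum r r₁ r₂ := by
    constructor
    · simp only [hr₁, hr₂, CoalRanking.domain]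
      simp [Finset.disjoint_singleton, hyx, hxy]
    · simp [hr, hr₁, hr₂]
  have hP : Pref antiplurality r₁ x y := by
    rw [ap_pref_iff]
    simp [hr₁, theta, cnt, Finset.filter_singleton, hxy]
  have hI : Ind antiplurality r₂ x y := by
    rw [ap_ind_iff]
    simp [hr₂, theta, cnt, Finset.filter_singleton]
  have := hpi r₁ r₂ r hconcat x y hP hI
  rw [ap_pref_iff] at this
  simp [hr, theta, cnt, Finset.filter_singleton, hxy] at this
end

section
/- In the setting of a variable domain of coalitions, the lex-cel solution R^L does not satisfy independence of the decomposition of the worst sets (IDWS): there exist weak orders ≿ and ≿', where ≿' is obtained from ≿ by decomposing the worst equivalence class, and individuals x, y with xP^L_≿y but not xP^L_{≿'}y. -/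
open SocRank

set_option maxHeartbeats 1000000 in
/-- in the variable-domain setting, lex-cel does not satisfy IDWS:
there are rankings `r` and `r'`, where `r'` is obtained from `r` by decomposing the
worst equivalence class, and individuals `x, y` with `x P^L_r y` but not `x P^L_{r'} y`. -/
theorem lexcel_not_idws {X : Type*} [DecidableEq X] [Fintype X]
    (hX : 3 ≤ Fintype.card X) :
    ∃ (r r' : CoalRanking X) (L G : List (Finset (Finset X))) (W : Finset (Finset X)),
      L ≠ [] ∧ r.classes = L ++ [W] ∧ r'.classes = L ++ G ∧
      G.foldr (· ∪ ·) ∅ = W ∧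
      ∃ x y : X, Pref lexcel r x y ∧ ¬ Pref lexcel r' x y := by
    classical
  obtain ⟨x, y, hxy⟩ := Fintype.exists_pair_of_one_lt_card (α := X) (by omega)
  have hne : ({x, y} : Finset X) ≠ Finset.univ := by
    intro h
    have h2 : ({x, y} : Finset X).card ≤ 2 := by
      have := Finset.card_insert_le x ({y} : Finset X)
      simpa using this
    rw [h, Finset.card_univ] at h2
    omega
  obtain ⟨z, _, hz⟩ := Finset.exists_of_ssubset (Finset.ssubset_univ_iff.mpr hne)
  simp only [Finset.mem_insert, Finset.mem_singleton, not_or] at hz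
  have hxz : x ≠ z := Ne.symm hz.1
  have hyz : y ≠ z := Ne.symm hz.2
  have hyx : y ≠ x := Ne.symm hxy
  have n1 : ({x, y, z} : Finset X) ≠ {x} := by
    intro h
    have hy : y ∈ ({x, y, z} : Finset X) := by simp
    rw [h] at hy; simp at hy; exact hxy hy.symm
  have n2 : ({x, y, z} : Finset X) ≠ {x, z} := by
    intro h
    have hy : y ∈ ({x, y, z} : Finset X) := by simp
    rw [h] at hy; simp at hy
    rcases hy with h' | h'
    · exact hxy h'.symm
    · exact hyz h'
  have n3 : ({x, y, z} : Finset X) ≠ {y} := by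
    intro h
    have hx : x ∈ ({x, y, z} : Finset X) := by simp
    rw [h] at hx; simp at hx; exact hxy hx
  have n4 : ({x} : Finset X) ≠ {y} := by
    intro h
    have hx : x ∈ ({x} : Finset X) := by simp
    rw [h] at hx; simp at hx; exact hxy hx
  have n5 : ({x, z} : Finset X) ≠ {y} := by
    intro h
    have hx : x ∈ ({x, z} : Finset X) := by simp
    rw [h] at hx; simp at hx; exact hxy hx
  have n6 : ({x} : Finset X) ≠ {x, z} := by
    intro h
    have hzz : z ∈ ({x, z} : Finset X) := by simp
    rw [← h] at hzz; simp at hzz; exact hxz hzz.symm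
  have hxyzne : ({x, y, z} : Finset X).Nonempty := ⟨x, by simp⟩
  -- filter computations
  have fWx : Finset.filter (fun S => x ∈ S) ({({x} : Finset X), {x, z}, {y}} : Finset (Finset X)) =
      ({({x} : Finset X), {x, z}} : Finset (Finset X)) := by
    ext S
    simp only [Finset.mem_filter, Finset.mem_insert, Finset.mem_singleton]
    constructor
    · rintro ⟨rfl | rfl | rfl, hxS⟩
      · exact Or.inl rfl
      · exact Or.inr rfl
      · simp only [Finset.mem_singleton] at hxS; exact absurd hxS hxy
    · rintro (rfl | rfl)
      · exact ⟨Or.inl rfl, by simp⟩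
      · exact ⟨Or.inr (Or.inl rfl), by simp⟩
  have fWy : Finset.filter (fun S => y ∈ S) ({({x} : Finset X), {x, z}, {y}} : Finset (Finset X)) =
      ({({y} : Finset X)} : Finset (Finset X)) := by
    ext S
    simp only [Finset.mem_filter, Finset.mem_insert, Finset.mem_singleton]
    constructor
    · rintro ⟨rfl | rfl | rfl, hyS⟩
      · simp only [Finset.mem_singleton] at hyS; exact absurd hyS hyx
      · simp only [Finset.mem_insert, Finset.mem_singleton] at hyS
        rcases hyS with h' | h'
        · exact absurd h' hyx
        · exact absurd h' hyz
      · exact rfl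
    · rintro rfl
      exact ⟨Or.inr (Or.inr rfl), by simp⟩
  -- cnt computations
  have cAx : cnt x ({({x, y, z} : Finset X)} : Finset (Finset X)) = 1 := by
    simp [cnt, Finset.filter_singleton]
  have cAy : cnt y ({({x, y, z} : Finset X)} : Finset (Finset X)) = 1 := by
    simp [cnt, Finset.filter_singleton]
  have cWx : cnt x ({({x} : Finset X), {x, z}, {y}} : Finset (Finset X)) = 2 := by
    unfold cnt
    rw [fWx, Finset.card_insert_of_notMem (by simp [n6]), Finset.card_singleton]
  have cWy : cnt y ({({x} : Finset X), {x, z}, {y}} : Finset (Finset X)) = 1 := by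
    unfold cnt
    rw [fWy, Finset.card_singleton]
  have cG1x : cnt x ({({y} : Finset X)} : Finset (Finset X)) = 0 := by
    simp [cnt, Finset.filter_singleton, hxy]
  have cG1y : cnt y ({({y} : Finset X)} : Finset (Finset X)) = 1 := by
    simp [cnt, Finset.filter_singleton]
  -- the two coalitional rankings
  have cne1 : ∀ C ∈ [({({x, y, z} : Finset X)} : Finset (Finset X)),
      ({({x} : Finset X), {x, z}, {y}} : Finset (Finset X))], C.Nonempty := by
    intro C hC
    simp only [List.mem_cons, List.not_mem_nil, or_false] at hC
    rcases hC with rfl | rfl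
    · exact ⟨({x, y, z} : Finset X), Finset.mem_singleton_self _⟩
    · exact ⟨({x} : Finset X), by simp⟩
  have co1 : ∀ C ∈ [({({x, y, z} : Finset X)} : Finset (Finset X)),
      ({({x} : Finset X), {x, z}, {y}} : Finset (Finset X))], ∀ S ∈ C, S.Nonempty := by
    intro C hC S hS
    simp only [List.mem_cons, List.not_mem_nil, or_false] at hC
    rcases hC with rfl | rfl
    · simp only [Finset.mem_singleton] at hS; subst hS; exact hxyzne
    · simp only [Finset.mem_insert, Finset.mem_singleton] at hS
      rcases hS with rfl | rfl | rfl
      · exact ⟨x, by simp⟩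
      · exact ⟨x, by simp⟩
      · exact ⟨y, by simp⟩
  have cd1 : ([({({x, y, z} : Finset X)} : Finset (Finset X)),
      ({({x} : Finset X), {x, z}, {y}} : Finset (Finset X))]).Pairwise Disjoint := by
    simp [List.pairwise_cons, Finset.disjoint_left, n1, n2, n3]
  have cne2 : ∀ C ∈ [({({x, y, z} : Finset X)} : Finset (Finset X)),
      ({({y} : Finset X)} : Finset (Finset X)),
      ({({x} : Finset X), {x, z}} : Finset (Finset X))], C.Nonempty := by
    intro C hC
    simp only [List.mem_cons, List.not_mem_nil, or_false] at hC
    rcases hC with rfl | rfl | rfl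
    · exact ⟨({x, y, z} : Finset X), Finset.mem_singleton_self _⟩
    · exact ⟨({y} : Finset X), Finset.mem_singleton_self _⟩
    · exact ⟨({x} : Finset X), by simp⟩
  have co2 : ∀ C ∈ [({({x, y, z} : Finset X)} : Finset (Finset X)),
      ({({y} : Finset X)} : Finset (Finset X)),
      ({({x} : Finset X), {x, z}} : Finset (Finset X))], ∀ S ∈ C, S.Nonempty := by
    intro C hC S hS
    simp only [List.mem_cons, List.not_mem_nil, or_false] at hC
    rcases hC with rfl | rfl | rfl
    · simp only [Finset.mem_singleton] at hS; subst hS; exact hxyzne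
    · simp only [Finset.mem_singleton] at hS; subst hS; exact ⟨y, by simp⟩
    · simp only [Finset.mem_insert, Finset.mem_singleton] at hS
      rcases hS with rfl | rfl
      · exact ⟨x, by simp⟩
      · exact ⟨x, by simp⟩
  have cd2 : ([({({x, y, z} : Finset X)} : Finset (Finset X)),
      ({({y} : Finset X)} : Finset (Finset X)),
      ({({x} : Finset X), {x, z}} : Finset (Finset X))]).Pairwise Disjoint := by
    simp [List.pairwise_cons, Finset.disjoint_left, n1, n2, n3, n4.symm, n5.symm]
  obtain ⟨r, hr⟩ : ∃ r : CoalRanking X, r.classes =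
      [({({x, y, z} : Finset X)} : Finset (Finset X)),
       ({({x} : Finset X), {x, z}, {y}} : Finset (Finset X))] :=
    ⟨⟨_, cne1, co1, cd1⟩, rfl⟩
  obtain ⟨r', hr'⟩ : ∃ r' : CoalRanking X, r'.classes =
      [({({x, y, z} : Finset X)} : Finset (Finset X)),
       ({({y} : Finset X)} : Finset (Finset X)),
       ({({x} : Finset X), {x, z}} : Finset (Finset X))] :=
    ⟨⟨_, cne2, co2, cd2⟩, rfl⟩
  refine ⟨r, r',
    [({({x, y, z} : Finset X)} : Finset (Finset X))],
    [({({y} : Finset X)} : Finset (Finset X)),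
     ({({x} : Finset X), {x, z}} : Finset (Finset X))],
    ({({x} : Finset X), {x, z}, {y}} : Finset (Finset X)),
    by simp, by rw [hr]; rfl, by rw [hr']; rfl, ?_, x, y, ?_, ?_⟩
  · simp only [List.foldr, Finset.union_empty]
    ext S
    simp only [Finset.mem_union, Finset.mem_insert, Finset.mem_singleton]
    tauto
  · constructor
    · show lexGE (theta r x) (theta r y)
      simp only [theta, hr, List.map_cons, List.map_nil, cAx, cAy, cWx, cWy]
      simp [lexGE]
    · show ¬ lexGE (theta r y) (theta r x)
      simp only [theta, hr, List.map_cons, List.map_nil, cAx, cAy, cWx, cWy]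
      simp [lexGE]
  · intro hP
    have h1 := hP.1
    simp only [lexcel, theta, hr', List.map_cons, List.map_nil, cAx, cAy, cG1x, cG1y] at h1
    simp [lexGE] at h1
end
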